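/- Let V be a 𝔤-module with action ρ, where 𝔤 = 𝔰𝔳(0). Then for every m ∈ ℤ, every polynomial u ∈ ℂ[x,y,z] and every w ∈ V: ρ(L_m)( u(ρ(L₀),ρ(M₀),ρ(Y₀))·w ) = u(ρ(L₀)−m·id, ρ(M₀), ρ(Y₀))·( ρ(L_m)·w ) − (m/2)·(∂u/∂z)(ρ(L₀)−m·id, ρ(M₀), ρ(Y₀))·( ρ(Y_m)·w ) + (m²/4)·(∂²u/∂z²)(ρ(L₀)−m·id, ρ(M₀), ρ(Y₀))·( ρ(M_m)·w ). Here u(A,B,C) denotes the operator obtained by substituting the pairwise commuting operators A, B, C for x, y, z in u, and ∂u/∂z, ∂²u/∂z² are formal partial derivatives. -/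

import Mathlib

/-!
Moving `T = ρ(L_m)` to the right through a monomial `A^i B^j C^k` in `A = ρ(L₀)`, `B = ρ(M₀)`,
`C = ρ(Y₀)`: it turns `A` into `A - m` (as `[L_m, L₀] = -m L_m`) and commutes with `B`, while
each passage through `C` leaves the correction `-(m/2) Y_m`, which in turn leaves `-m M_m` when
pushed through a further `C`, and `M_m` commutes with `C`. Hence
`T C^k = C^k T - k (m/2) C^(k-1) Y_m + (k choose 2) (m²/2) C^(k-2) M_m`, and the coefficients
`k` and `k (k - 1)` are exactly those of `∂/∂z` and `∂²/∂z²` on `z^k`.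
-/

/-- Evaluation of a polynomial `u(x,y,z)` at three operators `A, B, C`, applied to a
vector `w`: `u(A,B,C)·w` (when `A,B,C` pairwise commute, this is the usual substitution). -/
noncomputable def evalP {V : Type*} [AddCommGroup V] [Module ℂ V]
    (A B C : Module.End ℂ V) (w : V) (u : MvPolynomial (Fin 3) ℂ) : V :=
  (AddMonoidAlgebra.coeff u).sum fun d c => c • ((A ^ d 0 * B ^ d 1 * C ^ d 2) w)

open MvPolynomial

/-- The truncated exponents `k - 1`, `k - 2` only occur with coefficients that vanish when they
truncate. -/
theorem mul_pow_eq_of_mul_eq_sub_smul {K R : Type*} [CommRing K] [Ring R] [Algebra K R]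
    {T C Y M : R} {a b : K} (hT : T * C = C * T - a • Y) (hY : Y * C = C * Y - b • M)
    (hM : Commute M C) (k : ℕ) :
    T * C ^ k = C ^ k * T - (k * a) • (C ^ (k - 1) * Y)
      + (k.choose 2 * a * b) • (C ^ (k - 2) * M) := by
  induction k with
  | zero => simp
  | succ k ih =>
    have pow_mul_mul (n : ℕ) (X : R) : C ^ n * (C * X) = C ^ (n + 1) * X := by
      rw [← mul_assoc, ← pow_succ]
    rw [pow_succ, ← mul_assoc, ih]
    simp only [add_mul, sub_mul, smul_mul_assoc, mul_assoc, hT, hY, hM.eq, mul_sub,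
      mul_smul_comm, pow_mul_mul, Nat.choose_succ_succ', Nat.choose_one_right]
    rcases k with _ | _ | k
    · simp
    · simp
      module
    · simp only [Nat.add_sub_cancel]
      push_cast
      module

theorem LieModule.toEnd_mul_toEnd {R L M : Type*} [CommRing R] [LieRing L] [LieAlgebra R L]
    [AddCommGroup M] [Module R M] [LieRingModule L M] [LieModule R L M] (x y : L) :
    toEnd R L M x * toEnd R L M y = toEnd R L M y * toEnd R L M x + toEnd R L M ⁅x, y⁆ := by
  ext v
  simp only [Module.End.mul_apply, LinearMap.add_apply, toEnd_apply_apply]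
  rw [leibniz_lie, add_comm]

section evalP

variable {V : Type*} [AddCommGroup V] [Module ℂ V] (A B C : Module.End ℂ V) (w : V)

theorem evalP_add (u v : MvPolynomial (Fin 3) ℂ) :
    evalP A B C w (u + v) = evalP A B C w u + evalP A B C w v :=
  Finsupp.sum_add_index' (by simp) fun _ _ _ => add_smul _ _ _

theorem evalP_monomial (d : Fin 3 →₀ ℕ) (c : ℂ) :
    evalP A B C w (monomial d c) = c • (A ^ d 0 * B ^ d 1 * C ^ d 2) w :=
  sum_monomial_eq (zero_smul ℂ _)

variable {A B C} {T A' Y M : Module.End ℂ V} {a b : ℂ}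

theorem mul_monomial_eq (hA : SemiconjBy T A A') (hB : Commute T B)
    (hC : T * C = C * T - a • Y) (hY : Y * C = C * Y - b • M) (hM : Commute M C) (i j k : ℕ) :
    T * (A ^ i * B ^ j * C ^ k) = A' ^ i * B ^ j * C ^ k * T
      - (k * a) • (A' ^ i * B ^ j * C ^ (k - 1) * Y)
      + (k.choose 2 * a * b) • (A' ^ i * B ^ j * C ^ (k - 2) * M) := by
  rw [← mul_assoc, ← mul_assoc, (hA.pow_right i).eq, mul_assoc _ T, (hB.pow_right j).eq,
    mul_assoc, mul_assoc, mul_pow_eq_of_mul_eq_sub_smul hC hY hM]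
  simp only [mul_add, mul_sub, mul_smul_comm, mul_assoc]

theorem apply_evalP (hA : SemiconjBy T A A') (hB : Commute T B)
    (hC : T * C = C * T - a • Y) (hY : Y * C = C * Y - b • M) (hM : Commute M C)
    (u : MvPolynomial (Fin 3) ℂ) :
    T (evalP A B C w u) = evalP A' B C (T w) u - a • evalP A' B C (Y w) (pderiv 2 u)
      + (a * b / 2) • evalP A' B C (M w) (pderiv 2 (pderiv 2 u)) := by
  induction u using MvPolynomial.induction_on' with
  | add p q hp hq =>
    simp only [evalP_add, map_add, hp, hq]
    module
  | monomial d c =>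
    have h := congr($(mul_monomial_eq hA hB hC hY hM (d 0) (d 1) (d 2)) w)
    simp only [Module.End.mul_apply, LinearMap.sub_apply, LinearMap.add_apply,
      LinearMap.smul_apply] at h
    have cast_choose_two (k : ℕ) : (k.choose 2 : ℂ) = k * (k - 1 : ℕ) / 2 := by
      cases k <;> simp [Nat.cast_choose_two]
    simp only [evalP_monomial, pderiv_monomial, Module.End.mul_apply, map_smul, h,
      Finsupp.coe_tsub, Pi.sub_apply, ne_eq, Fin.reduceEq, not_false_eq_true,
      Finsupp.single_eq_of_ne, tsub_zero, Finsupp.single_eq_same, Nat.sub_sub, cast_choose_two]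
    module

end evalP

theorem stmt12_general
    -- `𝔤 = 𝔰𝔳(0)`: a complex Lie algebra with basis `{L n, M n, Y n : n ∈ ℤ}` ...
    (g : Type*) [LieRing g] [LieAlgebra ℂ g] (L M Y : ℤ → g)
    -- ... and the following brackets:
    (hLL : ∀ n m : ℤ, ⁅L n, L m⁆ = (((m : ℂ) - (n : ℂ))) • L (m + n))
    (hLY : ∀ n m : ℤ, ⁅L n, Y m⁆ = ((m : ℂ) - (n : ℂ) / 2) • Y (m + n))
    (hLM : ∀ n m : ℤ, ⁅L n, M m⁆ = (m : ℂ) • M (m + n))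
    (hYY : ∀ n m : ℤ, ⁅Y n, Y m⁆ = (((m : ℂ) - (n : ℂ))) • M (m + n))
    (hYM : ∀ n m : ℤ, ⁅Y n, M m⁆ = 0)
    -- a `𝔤`-module `V`:
    (V : Type*) [AddCommGroup V] [Module ℂ V] [LieRingModule g V] [LieModule ℂ g V]
    (m : ℤ) (u : MvPolynomial (Fin 3) ℂ) (w : V) :
    ⁅L m, evalP (LieModule.toEnd ℂ g V (L 0)) (LieModule.toEnd ℂ g V (M 0))
        (LieModule.toEnd ℂ g V (Y 0)) w u⁆ =
      evalP (LieModule.toEnd ℂ g V (L 0) - (m : ℂ) • 1) (LieModule.toEnd ℂ g V (M 0))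
        (LieModule.toEnd ℂ g V (Y 0)) ⁅L m, w⁆ u
      - ((m : ℂ) / 2) • evalP (LieModule.toEnd ℂ g V (L 0) - (m : ℂ) • 1)
          (LieModule.toEnd ℂ g V (M 0)) (LieModule.toEnd ℂ g V (Y 0)) ⁅Y m, w⁆
          (MvPolynomial.pderiv (2 : Fin 3) u)
      + ((m : ℂ) ^ 2 / 4) • evalP (LieModule.toEnd ℂ g V (L 0) - (m : ℂ) • 1)
          (LieModule.toEnd ℂ g V (M 0)) (LieModule.toEnd ℂ g V (Y 0)) ⁅M m, w⁆
          (MvPolynomial.pderiv (2 : Fin 3) (MvPolynomial.pderiv (2 : Fin 3) u)) := by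
  simp only [← LieModule.toEnd_apply_apply (R := ℂ)]
  generalize hρ : LieModule.toEnd ℂ g V = ρ
  have toEnd_mul (x y : g) : ρ x * ρ y = ρ y * ρ x + ρ ⁅x, y⁆ :=
    hρ ▸ LieModule.toEnd_mul_toEnd x y
  have hL0 : SemiconjBy (ρ (L m)) (ρ (L 0)) (ρ (L 0) - (m : ℂ) • 1) := by
    rw [SemiconjBy, toEnd_mul, hLL]
    simp [sub_eq_add_neg, add_mul]
  have hM0 : Commute (ρ (L m)) (ρ (M 0)) := by
    rw [Commute, SemiconjBy, toEnd_mul, hLM]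
    simp
  have hY0 : ρ (L m) * ρ (Y 0) = ρ (Y 0) * ρ (L m) - ((m : ℂ) / 2) • ρ (Y m) := by
    rw [toEnd_mul, hLY]
    simp [sub_eq_add_neg]
  have hYm : ρ (Y m) * ρ (Y 0) = ρ (Y 0) * ρ (Y m) - (m : ℂ) • ρ (M m) := by
    rw [toEnd_mul, hYY]
    simp [sub_eq_add_neg]
  have hMm : Commute (ρ (M m)) (ρ (Y 0)) := by
    rw [Commute, SemiconjBy, toEnd_mul, ← lie_skew, hYM]
    simp
  rw [show (m : ℂ) ^ 2 / 4 = m / 2 * m / 2 by ring]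
  exact apply_evalP w hL0 hM0 hY0 hYm hMm u

/-- For any `𝔰𝔳(0)`-module `V`, any `m ∈ ℤ`, `u ∈ ℂ[x,y,z]` and `w ∈ V`:
`ρ(L_m)(u(ρL₀,ρM₀,ρY₀)·w) = u(ρL₀ − m·id, ρM₀, ρY₀)·(ρ(L_m)·w)
  − (m/2)·(∂u/∂z)(ρL₀ − m·id, ρM₀, ρY₀)·(ρ(Y_m)·w)
  + (m²/4)·(∂²u/∂z²)(ρL₀ − m·id, ρM₀, ρY₀)·(ρ(M_m)·w)`. -/
theorem stmt12
    -- `𝔤 = 𝔰𝔳(0)`: a complex Lie algebra with basis `{L n, M n, Y n : n ∈ ℤ}` ...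
    (g : Type*) [LieRing g] [LieAlgebra ℂ g] (L M Y : ℤ → g)
    (B : Module.Basis (Fin 3 × ℤ) ℂ g)
    (hB : ∀ n : ℤ, B (0, n) = L n ∧ B (1, n) = M n ∧ B (2, n) = Y n)
    -- ... and the following brackets:
    (hLL : ∀ n m : ℤ, ⁅L n, L m⁆ = (((m : ℂ) - (n : ℂ))) • L (m + n))
    (hLY : ∀ n m : ℤ, ⁅L n, Y m⁆ = ((m : ℂ) - (n : ℂ) / 2) • Y (m + n))
    (hLM : ∀ n m : ℤ, ⁅L n, M m⁆ = (m : ℂ) • M (m + n))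
    (hYY : ∀ n m : ℤ, ⁅Y n, Y m⁆ = (((m : ℂ) - (n : ℂ))) • M (m + n))
    (hYM : ∀ n m : ℤ, ⁅Y n, M m⁆ = 0)
    (hMM : ∀ n m : ℤ, ⁅M n, M m⁆ = 0)
    -- a `𝔤`-module `V`:
    (V : Type*) [AddCommGroup V] [Module ℂ V] [LieRingModule g V] [LieModule ℂ g V]
    (m : ℤ) (u : MvPolynomial (Fin 3) ℂ) (w : V) :
    ⁅L m, evalP (LieModule.toEnd ℂ g V (L 0)) (LieModule.toEnd ℂ g V (M 0))
        (LieModule.toEnd ℂ g V (Y 0)) w u⁆ =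
      evalP (LieModule.toEnd ℂ g V (L 0) - (m : ℂ) • 1) (LieModule.toEnd ℂ g V (M 0))
        (LieModule.toEnd ℂ g V (Y 0)) ⁅L m, w⁆ u
      - ((m : ℂ) / 2) • evalP (LieModule.toEnd ℂ g V (L 0) - (m : ℂ) • 1)
          (LieModule.toEnd ℂ g V (M 0)) (LieModule.toEnd ℂ g V (Y 0)) ⁅Y m, w⁆
          (MvPolynomial.pderiv (2 : Fin 3) u)
      + ((m : ℂ) ^ 2 / 4) • evalP (LieModule.toEnd ℂ g V (L 0) - (m : ℂ) • 1)
          (LieModule.toEnd ℂ g V (M 0)) (LieModule.toEnd ℂ g V (Y 0)) ⁅M m, w⁆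
          (MvPolynomial.pderiv (2 : Fin 3) (MvPolynomial.pderiv (2 : Fin 3) u)) :=
  stmt12_general g L M Y hLL hLY hLM hYY hYM V m u w
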